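/- In the independence system M(k,h,m), if C ⊆ D are independent, u ∉ D with C ∪ {u} independent, and |D \ C| ≥ k, then for any subset Y ⊆ D \ C of size exactly k, the set (D \ Y) ∪ {u} is independent. -/

import Mathlib

/-!
Writing `t = 2km/h`, one has `g x = x - (1 - 1/k) · max (x - t) 0`, so on an interval of
length `ℓ` the function `g` grows by at least `ℓ/k` and at most `ℓ`. Hence adding `u` raises `Σ`
by at most `1`, while removing `k` elements of `D` lowers it by at least `1`: each element off
`H_1` costs `1 ≥ 1/k`, each element of `H_1` costs at least `1/k`. So `Σ(D \ Y + u) ≤ Σ(D) ≤ m`.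
-/

/-- `g_{m,k}(x) = min{x, 2km/h} + max{(x - 2km/h)/k, 0}` -/
noncomputable def g (k h m : ℕ) (x : ℝ) : ℝ :=
  min x (2 * k * m / h) + max ((x - 2 * k * m / h) / k) 0

/-- The ground set `N = ⋃_{i=1}^h H_i` with `H_i` disjoint of size `km` is modeled
as `Fin h × Fin (k*m)`, where `H_i = {i} × Fin (k*m)` and `H_1` is `{0} × Fin (k*m)`. -/
abbrev Elem (k h m : ℕ) := Fin h × Fin (k * m)

/-- `Σ(S) = g_{m,k}(|S ∩ H_1|) + |S \ H_1|`. -/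
noncomputable def Sigma' (k h m : ℕ) (S : Finset (Elem k h m)) : ℝ :=
  g k h m ((S.filter (fun p => (p.1 : ℕ) = 0)).card) +
    ((S.filter (fun p => (p.1 : ℕ) ≠ 0)).card : ℝ)

/-- `S` is independent in `M(k,h,m)` iff `g_{m,k}(|S ∩ H_1|) + |S \ H_1| ≤ m`. -/
noncomputable def Indep (k h m : ℕ) (S : Finset (Elem k h m)) : Prop :=
  Sigma' k h m S ≤ (m : ℝ)

open Finset

theorem Finset.card_filter_sdiff_add_card_filter {α : Type*} [DecidableEq α] (p : α → Prop)
    [DecidablePred p] {s t : Finset α} (hts : t ⊆ s) :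
    #((s \ t).filter p) + #(t.filter p) = #(s.filter p) := by
  rw [← card_union_of_disjoint (disjoint_sdiff_self_left.mono (filter_subset _ _)
    (filter_subset _ _)), ← filter_union, sdiff_union_of_subset hts]

section

variable {k h m : ℕ}

theorem g_eq_sub_mul_max (x : ℝ) :
    g k h m x = x - (1 - (k : ℝ)⁻¹) * max (x - 2 * k * m / h) 0 := by
  unfold g
  rcases le_total x (2 * k * m / h) with hx | hx
  · rw [min_eq_left hx, max_eq_right (sub_nonpos.2 hx),
      max_eq_right (div_nonpos_of_nonpos_of_nonneg (sub_nonpos.2 hx) k.cast_nonneg)]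
    ring
  · rw [min_eq_right hx, max_eq_left (sub_nonneg.2 hx),
      max_eq_left (div_nonneg (sub_nonneg.2 hx) k.cast_nonneg)]
    ring

theorem g_sub_g_le {x y : ℝ} (hxy : x ≤ y) : g k h m y - g k h m x ≤ y - x := by
  have hc : 0 ≤ 1 - (k : ℝ)⁻¹ := sub_nonneg.2 (Nat.cast_inv_le_one k)
  have hmax : max (x - 2 * k * m / h) 0 ≤ max (y - 2 * k * m / h) 0 := by gcongr
  rw [g_eq_sub_mul_max, g_eq_sub_mul_max]
  nlinarith

theorem div_le_g_sub_g {x y : ℝ} (hxy : x ≤ y) : (y - x) / k ≤ g k h m y - g k h m x := by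
  have hc : 0 ≤ 1 - (k : ℝ)⁻¹ := sub_nonneg.2 (Nat.cast_inv_le_one k)
  have hmax : max (y - 2 * k * m / h) 0 ≤ max (x - 2 * k * m / h) 0 + (y - x) := by
    rw [max_le_iff]
    constructor
    · linarith [le_max_left (x - 2 * k * m / h) 0]
    · linarith [le_max_right (x - 2 * k * m / h) 0]
  rw [g_eq_sub_mul_max, g_eq_sub_mul_max, div_eq_mul_inv]
  nlinarith

theorem Sigma'_insert_le {S : Finset (Elem k h m)} {u : Elem k h m} (hu : u ∉ S) :
    Sigma' k h m (insert u S) ≤ Sigma' k h m S + 1 := by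
  unfold Sigma'
  by_cases hu₀ : (u.1 : ℕ) = 0
  · rw [filter_insert, if_pos hu₀, filter_insert, if_neg (not_not.2 hu₀),
      card_insert_of_notMem (fun hmem => hu (mem_of_mem_filter u hmem)), Nat.cast_succ]
    have hg := g_sub_g_le (k := k) (h := h) (m := m)
      (le_add_of_nonneg_right zero_le_one (a := (#(S.filter fun p => (p.1 : ℕ) = 0) : ℝ)))
    linarith
  · rw [filter_insert, if_neg hu₀, filter_insert, if_pos hu₀,
      card_insert_of_notMem (fun hmem => hu (mem_of_mem_filter u hmem)), Nat.cast_succ]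
    linarith

theorem Sigma'_sdiff_add_card_div_le {D Y : Finset (Elem k h m)} (hYD : Y ⊆ D) :
    Sigma' k h m (D \ Y) + #Y / k ≤ Sigma' k h m D := by
  unfold Sigma'
  simp only [ne_eq]
  rw [← card_filter_sdiff_add_card_filter _ hYD, ← card_filter_sdiff_add_card_filter _ hYD,
    ← card_filter_add_card_filter_not (s := Y) fun p => (p.1 : ℕ) = 0]
  push_cast
  set a : ℝ := ((#((D \ Y).filter fun p => (p.1 : ℕ) = 0) : ℕ) : ℝ)
  set y₀ : ℝ := ((#(Y.filter fun p => (p.1 : ℕ) = 0) : ℕ) : ℝ)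
  set y₁ : ℝ := ((#(Y.filter fun p => ¬ (p.1 : ℕ) = 0) : ℕ) : ℝ)
  have hg : y₀ / k ≤ g k h m (a + y₀) - g k h m a := by
    simpa using div_le_g_sub_g (k := k) (h := h) (m := m)
      (le_add_of_nonneg_right (by positivity : 0 ≤ y₀))
  have hy₁ : y₁ / k ≤ y₁ := by
    rcases k.eq_zero_or_pos with hk | hk
    · simp only [hk, Nat.cast_zero, div_zero]
      positivity
    · exact div_le_self (by positivity) (Nat.one_le_cast.2 hk)
  linarith [add_div y₀ y₁ k]

end

theorem M_remove_k_swap_general (k h m : ℕ) (hk : 0 < k)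
    (C D : Finset (Elem k h m)) (u : Elem k h m)
    (hD : Indep k h m D) (hu : u ∉ D)
    (Y : Finset (Elem k h m)) (hY : Y ⊆ D \ C) (hYcard : Y.card = k) :
    Indep k h m (insert u (D \ Y)) := by
  have hYD : Y ⊆ D := hY.trans sdiff_subset
  have hY_div : (#Y : ℝ) / k = 1 := by
    rw [hYcard]
    exact div_self (by positivity)
  calc Sigma' k h m (insert u (D \ Y))
      ≤ Sigma' k h m (D \ Y) + 1 := Sigma'_insert_le fun hmem => hu (mem_sdiff.1 hmem).1
    _ ≤ Sigma' k h m D := by linarith [Sigma'_sdiff_add_card_div_le hYD]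
    _ ≤ m := hD

/-- If `C ⊆ D` are independent, `u ∉ D`, `C + u` is independent and `|D \ C| ≥ k`,
then removing any `Y ⊆ D \ C` of size exactly `k` makes `D \ Y + u` independent. -/
theorem M_remove_k_swap (k h m : ℕ) (hk : 0 < k) (hh : 0 < h) (hm : 0 < m)
    (hdiv : 2 * k ∣ h) (C D : Finset (Elem k h m)) (u : Elem k h m)
    (hCD : C ⊆ D) (hC : Indep k h m C) (hD : Indep k h m D) (hu : u ∉ D)
    (hCu : Indep k h m (insert u C)) (hbig : k ≤ (D \ C).card)
    (Y : Finset (Elem k h m)) (hY : Y ⊆ D \ C) (hYcard : Y.card = k) :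
    Indep k h m (insert u (D \ Y)) :=
  M_remove_k_swap_general k h m hk C D u hD hu Y hY hYcard
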